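/- arXiv:1203.6429 — 4 statements merged into one kernel-verified Lean document; each statement's English description precedes it below -/
import Mathlib

section
/- Let S = P1···P_{d+1} be a simplex in R^d, let P be a point, and let P_i' be the reflection of P across the affine hyperplane spanned by the facet of S opposite P_i, for i = 1,...,d+1. Suppose Q is a point equidistant from P_1',...,P_{d+1}' (so Q = Iso_S(P), the isogonal conjugate of P). Let Q_i' be the reflection of Q across the facet opposite P_i. Then P is equidistant from Q_1',...,Q_{d+1}'; that is, isogonal conjugation is an involution: Iso_S(Iso_S(P)) = P. -/
/-- A point `p'` is the orthogonal reflection of `p` across the affine subspace `s`. -/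
def IsReflection {d : ℕ} (s : AffineSubspace ℝ (EuclideanSpace ℝ (Fin d)))
    (p p' : EuclideanSpace ℝ (Fin d)) : Prop :=
  midpoint ℝ p p' ∈ s ∧ p' -ᵥ p ∈ s.directionᗮ

section

open EuclideanGeometry

variable {d : ℕ} {s : AffineSubspace ℝ (EuclideanSpace ℝ (Fin d))}
  {p p' q q' : EuclideanSpace ℝ (Fin d)}

lemma IsReflection.nonempty (h : IsReflection s p p') : Nonempty s :=
  ⟨⟨_, h.1⟩⟩

lemma IsReflection.reflection_eq [Nonempty s] (h : IsReflection s p p') :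
    reflection s p = p' := by
  set m := midpoint ℝ p p'
  have hv : p -ᵥ m ∈ s.directionᗮ := by
    rw [left_vsub_midpoint, ← neg_vsub_eq_vsub_rev, smul_neg]
    exact Submodule.neg_mem _ (Submodule.smul_mem _ _ h.2)
  calc reflection s p = reflection s ((p -ᵥ m) +ᵥ m) := by rw [vsub_vadd]
    _ = -(p -ᵥ m) +ᵥ m := reflection_orthogonal_vadd h.1 hv
    _ = p' := by
      rw [neg_vsub_eq_vsub_rev, midpoint_vsub_left]
      simp [m, midpoint_eq_smul_add]
      module

theorem IsReflection.dist_eq_dist (hp : IsReflection s p p') (hq : IsReflection s q q') :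
    dist p q' = dist q p' := by
  have := hp.nonempty
  rw [← hp.reflection_eq, ← hq.reflection_eq, dist_comm q]
  exact dist_reflection s p q

end

theorem stmt_2_general {d : ℕ} (P : Fin (d + 1) → EuclideanSpace ℝ (Fin d))
    (p : EuclideanSpace ℝ (Fin d))
    (P' : Fin (d + 1) → EuclideanSpace ℝ (Fin d))
    (hP' : ∀ i, IsReflection (affineSpan ℝ (P '' ({i}ᶜ : Set (Fin (d + 1))))) p (P' i))
    (Q : EuclideanSpace ℝ (Fin d)) (r : ℝ) (hQ : ∀ i, dist Q (P' i) = r)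
    (Q' : Fin (d + 1) → EuclideanSpace ℝ (Fin d))
    (hQ' : ∀ i, IsReflection (affineSpan ℝ (P '' ({i}ᶜ : Set (Fin (d + 1))))) Q (Q' i)) :
    ∃ r' : ℝ, ∀ i, dist p (Q' i) = r' :=
  ⟨r, fun i => ((hP' i).dist_eq_dist (hQ' i)).trans (hQ i)⟩

/-- Isogonal conjugation with respect to a simplex `S = P₁⋯P_{d+1}` in
`ℝ^d` is an involution: if `P'ᵢ` are the reflections of `P` in the facet hyperplanes
of `S`, `Q` is equidistant from the `P'ᵢ` (i.e. `Q = Iso_S(P)`), and `Q'ᵢ` are the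
reflections of `Q` in the facet hyperplanes, then `P` is equidistant from the `Q'ᵢ`
(i.e. `Iso_S(Iso_S(P)) = P`). -/
theorem stmt_2 {d : ℕ} (hd : 1 ≤ d) (P : Fin (d + 1) → EuclideanSpace ℝ (Fin d))
    (hP : AffineIndependent ℝ P)
    (p : EuclideanSpace ℝ (Fin d)) (hp : ∀ i, p ≠ P i)
    (P' : Fin (d + 1) → EuclideanSpace ℝ (Fin d))
    (hP' : ∀ i, IsReflection (affineSpan ℝ (P '' ({i}ᶜ : Set (Fin (d + 1))))) p (P' i))
    (Q : EuclideanSpace ℝ (Fin d)) (r : ℝ) (hQ : ∀ i, dist Q (P' i) = r)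
    (Q' : Fin (d + 1) → EuclideanSpace ℝ (Fin d))
    (hQ' : ∀ i, IsReflection (affineSpan ℝ (P '' ({i}ᶜ : Set (Fin (d + 1))))) Q (Q' i)) :
    ∃ r' : ℝ, ∀ i, dist p (Q' i) = r' :=
  stmt_2_general P p P' hP' Q r hQ Q' hQ'
end

section
/- Let V1,...,Vn be n points in R^{n-2} such that every n-1 of them are affinely independent and they are not conhyperspherical. Let V_i^{(2)} be the circumcenter of {V_j : j ≠ i}. Then any n-1 of the points V_1^{(2)},...,V_n^{(2)} are affinely independent. -/
/-!
Let `p_j(x) = dist (W j) x ^ 2 - r_j ^ 2` be the power of `x` with respect to the `j`-th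
circumsphere. If `∑ w_j = 0` and `∑ w_j • W j = 0`, then `∑ w_j p_j(x)` is constant in `x`,
since the quadratic and linear parts cancel. At `V i` every `p_j` vanishes, so the constant is
`0`; at `V e` only `p_e` survives, and `p_e(V e) ≠ 0` because otherwise all `n` points would
lie on the sphere about `W e`. Hence every `w_e = 0`.
-/

open Finset RealInnerProductSpace

variable {ι E : Type*} [NormedAddCommGroup E] [InnerProductSpace ℝ E]

theorem sum_mul_dist_sq_eq_sum_mul_norm_sq {s : Finset ι} {w : ι → ℝ} {c : ι → E}
    (hw : ∑ i ∈ s, w i = 0) (hwc : ∑ i ∈ s, w i • c i = 0) (x : E) :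
    ∑ i ∈ s, w i * dist (c i) x ^ 2 = ∑ i ∈ s, w i * ‖c i‖ ^ 2 := by
  have hinner : ∑ i ∈ s, w i * ⟪x, c i⟫ = 0 := by
    simp_rw [← real_inner_smul_right, ← inner_sum, hwc, inner_zero_right]
  simp_rw [dist_comm _ x, dist_eq_norm, norm_sub_sq_real, mul_add, mul_sub, sum_add_distrib, sum_sub_distrib,
    ← sum_mul, hw, mul_left_comm _ (2 : ℝ), ← mul_sum, hinner]
  ring

theorem affineIndependent_of_dist_eq_of_dist_ne (c : ι → E) (r : ι → ℝ) (x : ι → E) (p : E)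
    (hp : ∀ j, dist (c j) p = r j) (hx : ∀ j k, j ≠ k → dist (c j) (x k) = r j)
    (hxx : ∀ j, dist (c j) (x j) ≠ r j) : AffineIndependent ℝ c := by
  classical
  rw [affineIndependent_iff]
  intro s w hw hwc e he
  have hpow : ∑ j ∈ s, w j * dist (c j) p ^ 2 = ∑ j ∈ s, w j * r j ^ 2 := by
    simp_rw [hp]
  have hxe : ∑ j ∈ s, w j * dist (c j) (x e) ^ 2
      = ∑ j ∈ s, w j * r j ^ 2 + w e * (dist (c e) (x e) ^ 2 - r e ^ 2) := by
    rw [← sum_erase_add s _ he, ← sum_erase_add s _ he]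
    have hoff : ∀ j ∈ s.erase e, w j * dist (c j) (x e) ^ 2 = w j * r j ^ 2 := fun j hj => by
      rw [hx j e (ne_of_mem_erase hj)]
    rw [sum_congr rfl hoff]
    ring
  have hdiff : w e * (dist (c e) (x e) ^ 2 - r e ^ 2) = 0 := by
    have := (sum_mul_dist_sq_eq_sum_mul_norm_sq hw hwc (x e)).trans
      (sum_mul_dist_sq_eq_sum_mul_norm_sq hw hwc p).symm
    linarith
  refine (mul_eq_zero.mp hdiff).resolve_right fun h => hxx e ?_
  have hr : 0 ≤ r e := hp e ▸ dist_nonneg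
  nlinarith [dist_nonneg (x := c e) (y := x e)]

theorem stmt_8_general {n : ℕ} (V : Fin n → EuclideanSpace ℝ (Fin (n - 2)))
    (hnoncon : ¬∃ (C : EuclideanSpace ℝ (Fin (n - 2))) (r : ℝ), ∀ i, dist C (V i) = r)
    (W : Fin n → EuclideanSpace ℝ (Fin (n - 2)))
    (hW : ∀ i, ∃ r : ℝ, ∀ j, j ≠ i → dist (W i) (V j) = r) :
    ∀ i : Fin n, AffineIndependent ℝ (fun j : {j : Fin n // j ≠ i} => W j) := by
  choose r hr using hW
  intro i
  refine affineIndependent_of_dist_eq_of_dist_ne (ι := {j : Fin n // j ≠ i})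
    (fun j => W j) (fun j => r j) (fun j => V j) (V i)
    (fun j => hr j i j.2.symm) (fun j k hjk => hr j k (Subtype.coe_ne_coe.mpr hjk.symm))
    (fun j hj => hnoncon ⟨W j, r j, fun m => ?_⟩)
  by_cases hm : m = j
  · exact hm ▸ hj
  · exact hr j m hm

/-- If every `n-1` of the points `V₁,...,Vₙ` in `ℝ^{n-2}` are affinely
independent and the points are not conhyperspherical, then any `n-1` of the
second-generation points `V_i^{(2)}` (circumcenters of the complementary `n-1`-point
subsets) are affinely independent. -/
theorem stmt_8 {n : ℕ} (V : Fin n → EuclideanSpace ℝ (Fin (n - 2)))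
    (hind : ∀ i : Fin n, AffineIndependent ℝ (fun j : {j : Fin n // j ≠ i} => V j))
    (hnoncon : ¬∃ (C : EuclideanSpace ℝ (Fin (n - 2))) (r : ℝ), ∀ i, dist C (V i) = r)
    (W : Fin n → EuclideanSpace ℝ (Fin (n - 2)))
    (hW : ∀ i, ∃ r : ℝ, ∀ j, j ≠ i → dist (W i) (V j) = r) :
    ∀ i : Fin n, AffineIndependent ℝ (fun j : {j : Fin n // j ≠ i} => W j) :=
  stmt_8_general V hnoncon W hW
end

section
/- Let V1,...,Vn be points in R^{n-2} satisfying the nondegeneracy hypotheses, and suppose for each generation k the construction is defined. Then all odd-generation point sets N^{(1)}, N^{(3)}, N^{(5)}, ... are pairwise homothetic (there is a homothety or translation of R^{n-2} carrying V_i^{(2j+1)} to V_i^{(2l+1)} for all i), and similarly all even-generation sets N^{(2)}, N^{(4)}, ... are pairwise homothetic. -/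
/-!
Any `n - 1` points of a generation `p` are affinely independent in `ℝ^(n-2)`, so `p` carries an
affine dependency `∑ aᵢ pᵢ = 0`, `∑ aᵢ = 0`, with every `aᵢ ≠ 0`. For it, `x ↦ ∑ aᵢ ‖x - pᵢ‖²` is
the constant `β = ∑ aᵢ ‖pᵢ‖²`. Evaluated at the next-generation point `qᵢ`, which is at distance
`rᵢ` from every `pⱼ` with `j ≠ i`, this gives `aᵢ ‖qᵢ - pᵢ‖² = aᵢ rᵢ² + β`, and `β ≠ 0` since `p`
is not cospherical. Summing these relations over `i` shows `∑ aᵢ qᵢ = 0`: the next generation has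
the same dependency. For three consecutive generations `p, q, s` and `k = β' / β`, the quantity
`‖sᵢ - qⱼ‖² - k ‖pᵢ - qⱼ‖²` is a function of `i` plus a function of `j`, which forces `sᵢ - k pᵢ`
to be independent of `i`, i.e. `s` is the image of `p` under `z ↦ k z + v`.
-/

/-- Two labelled point configurations are homothetic: related by a central dilation
(with some center `c` and ratio `k ≠ 0`) or by a translation, uniformly in the
index. -/
def Homothetic {n d : ℕ} (X Y : Fin n → EuclideanSpace ℝ (Fin d)) : Prop :=
  (∃ (c : EuclideanSpace ℝ (Fin d)) (k : ℝ), k ≠ 0 ∧ ∀ i, Y i - c = k • (X i - c)) ∨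
    (∃ v : EuclideanSpace ℝ (Fin d), ∀ i, Y i = X i + v)

open Finset Module RealInnerProductSpace

variable {ι E : Type*} [NormedAddCommGroup E] [InnerProductSpace ℝ E]

theorem eq_zero_of_inner_eq_of_vectorSpan_eq_top {p : ι → E}
    (hp : vectorSpan ℝ (Set.range p) = ⊤) {x : E} (hx : ∀ j l, ⟪x, p j⟫ = ⟪x, p l⟫) :
    x = 0 := by
  have hker : vectorSpan ℝ (Set.range p) ≤ LinearMap.ker (innerₛₗ ℝ x) := by
    rw [vectorSpan_def, Submodule.span_le]
    rintro _ ⟨_, ⟨j, rfl⟩, _, ⟨l, rfl⟩, rfl⟩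
    simp [inner_sub_right, hx j l]
  simpa using hker (hp ▸ Submodule.mem_top : x ∈ vectorSpan ℝ (Set.range p))

theorem vectorSpan_eq_top_of_affineIndependent_compl [Fintype ι] [DecidableEq ι]
    [FiniteDimensional ℝ E] {p : ι → E} (hcard : Fintype.card ι = finrank ℝ E + 2) (i : ι)
    (hind : AffineIndependent ℝ fun j : {j // j ≠ i} => p j) :
    vectorSpan ℝ (Set.range p) = ⊤ := by
  refine eq_top_mono (vectorSpan_mono ℝ ?_) (hind.vectorSpan_eq_top_of_card_eq_finrank_add_one ?_)
  · rintro _ ⟨j, rfl⟩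
    exact ⟨j, rfl⟩
  · rw [Fintype.card_subtype_compl, Fintype.card_subtype_eq]
    omega

theorem exists_affine_dependence_forall_ne_zero [Fintype ι] [FiniteDimensional ℝ E] [DecidableEq ι]
    {p : ι → E} (hcard : Fintype.card ι = finrank ℝ E + 2)
    (hind : ∀ i : ι, AffineIndependent ℝ fun j : {j // j ≠ i} => p j) :
    ∃ a : ι → ℝ, (∀ i, a i ≠ 0) ∧ ∑ i, a i = 0 ∧ ∑ i, a i • p i = 0 := by
  have hdep : ¬AffineIndependent ℝ p := by
    rw [← finrank_vectorSpan_le_iff_not_affineIndependent ℝ p hcard]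
    exact Submodule.finrank_le _
  simp only [affineIndependent_iff_of_fintype, not_forall] at hdep
  obtain ⟨a, ha, hap, i, hai⟩ := hdep
  rw [weightedVSub_eq_linear_combination _ ha] at hap
  refine ⟨a, fun l hl => hai ?_, ha, hap⟩
  -- a dependency with `a l = 0` would restrict to one of the independent family without `p l`
  have hrest := (affineIndependent_iff_of_fintype ℝ _).1 (hind l) (fun j => a j)
    (by simpa [Fintype.sum_eq_add_sum_subtype_ne a l, hl] using ha)
    (by
      rw [weightedVSub_eq_linear_combination _
        (by simpa [Fintype.sum_eq_add_sum_subtype_ne a l, hl] using ha)]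
      simpa [Fintype.sum_eq_add_sum_subtype_ne (fun j => a j • p j) l, hl] using hap)
  by_cases hil : i = l
  · exact hil ▸ hl
  · exact hrest ⟨i, hil⟩

theorem sum_mul_dist_sq_of_sum_eq_zero [Fintype ι] {a : ι → ℝ} (ha : ∑ i, a i = 0) (q : ι → E)
    (x : E) :
    ∑ i, a i * dist (q i) x ^ 2 = ∑ i, a i * ‖q i‖ ^ 2 - 2 * ⟪∑ i, a i • q i, x⟫ := by
  simp only [dist_eq_norm, norm_sub_sq_real, mul_add, mul_sub, sum_add_distrib, sum_sub_distrib,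
    ← sum_mul, ha, zero_mul, add_zero, sum_inner, real_inner_smul_left, mul_sum]
  congr 1
  exact sum_congr rfl fun i _ => by ring

theorem exists_mul_dist_sq_eq_of_equidistant [Fintype ι] [DecidableEq ι] {p q : ι → E}
    (hpq : ∀ i, ∃ r : ℝ, ∀ j, j ≠ i → dist (q i) (p j) = r)
    {a : ι → ℝ} (ha : ∑ i, a i = 0) (hap : ∑ i, a i • p i = 0) :
    ∃ r : ι → ℝ, ∀ i j, a i * dist (q i) (p j) ^ 2 =
      a i * r i ^ 2 + if j = i then ∑ l, a l * ‖p l‖ ^ 2 else 0 := by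
  choose r hr using hpq
  refine ⟨r, fun i j => ?_⟩
  split_ifs with hji
  · subst hji
    have hsplit : ∀ l, a l * dist (p l) (q j) ^ 2 =
        a l * r j ^ 2 + if l = j then a j * (dist (q j) (p j) ^ 2 - r j ^ 2) else 0 := by
      intro l
      split_ifs with hlj
      · subst hlj
        rw [dist_comm]
        ring
      · rw [dist_comm, hr j l hlj, add_zero]
    have hsum := sum_mul_dist_sq_of_sum_eq_zero ha p (q j)
    simp only [hsplit, sum_add_distrib, ← sum_mul, ha, sum_ite_eq', mem_univ, if_true, hap,
      inner_zero_left] at hsum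
    linarith
  · rw [hr i j hji, add_zero]

theorem ne_zero_of_not_cospherical {P : Type*} [PseudoMetricSpace P] [Nonempty ι] [DecidableEq ι]
    {p q : ι → P} {a r : ι → ℝ} {β : ℝ} (ha : ∀ i, a i ≠ 0)
    (hr : ∀ i j, a i * dist (q i) (p j) ^ 2 = a i * r i ^ 2 + if j = i then β else 0)
    (hp : ¬∃ (c : P) (ρ : ℝ), ∀ i, dist c (p i) = ρ) :
    β ≠ 0 := by
  rintro rfl
  obtain ⟨i⟩ := ‹Nonempty ι›
  refine hp ⟨q i, |r i|, fun j => ?_⟩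
  have hsq : dist (q i) (p j) ^ 2 = r i ^ 2 :=
    mul_left_cancel₀ (ha i) (by simpa using hr i j)
  rw [sq_eq_sq_iff_abs_eq_abs, abs_dist] at hsq
  exact hsq

theorem sum_smul_eq_zero_of_mul_dist_sq_eq [Fintype ι] [DecidableEq ι] {p q : ι → E}
    (hp : vectorSpan ℝ (Set.range p) = ⊤) {a r : ι → ℝ} {β : ℝ} (ha : ∑ i, a i = 0)
    (hr : ∀ i j, a i * dist (q i) (p j) ^ 2 = a i * r i ^ 2 + if j = i then β else 0) :
    ∑ i, a i • q i = 0 := by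
  have hsum : ∀ j, ∑ i, a i * dist (q i) (p j) ^ 2 = ∑ i, a i * r i ^ 2 + β := fun j => by
    simp only [hr _ j, sum_add_distrib, sum_ite_eq, mem_univ, if_true]
  refine eq_zero_of_inner_eq_of_vectorSpan_eq_top hp fun j l => ?_
  have hj := sum_mul_dist_sq_of_sum_eq_zero ha q (p j)
  have hl := sum_mul_dist_sq_of_sum_eq_zero ha q (p l)
  linarith [hsum j, hsum l]

theorem eq_of_inner_eq_add {κ : Type*} {x : κ → E} {y : ι → E}
    (hy : vectorSpan ℝ (Set.range y) = ⊤) {g : κ → ℝ} {h : ι → ℝ}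
    (hxy : ∀ i j, ⟪x i, y j⟫ = g i + h j) (i l : κ) : x i = x l :=
  sub_eq_zero.1 <| eq_zero_of_inner_eq_of_vectorSpan_eq_top hy fun j m => by
    simp only [inner_sub_left, hxy, add_sub_add_right_eq_sub]

theorem exists_smul_add_of_equidistant_two_step [Fintype ι] [DecidableEq ι]
    [FiniteDimensional ℝ E] {p q s : ι → E} (hcard : Fintype.card ι = finrank ℝ E + 2)
    (hpq : ∀ i, ∃ r : ℝ, ∀ j, j ≠ i → dist (q i) (p j) = r)
    (hqs : ∀ i, ∃ r : ℝ, ∀ j, j ≠ i → dist (s i) (q j) = r)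
    (hindp : ∀ i : ι, AffineIndependent ℝ fun j : {j // j ≠ i} => p j)
    (hindq : ∀ i : ι, AffineIndependent ℝ fun j : {j // j ≠ i} => q j)
    (hp : ¬∃ (c : E) (ρ : ℝ), ∀ i, dist c (p i) = ρ)
    (hq : ¬∃ (c : E) (ρ : ℝ), ∀ i, dist c (q i) = ρ) :
    ∃ k : ℝ, k ≠ 0 ∧ ∃ v : E, ∀ i, s i = k • p i + v := by
  have : Nonempty ι := Fintype.card_pos_iff.1 (by omega)
  let i₀ : ι := Classical.arbitrary ι
  have hspanp := vectorSpan_eq_top_of_affineIndependent_compl hcard i₀ (hindp i₀)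
  have hspanq := vectorSpan_eq_top_of_affineIndependent_compl hcard i₀ (hindq i₀)
  obtain ⟨a, ha0, ha, hap⟩ := exists_affine_dependence_forall_ne_zero hcard hindp
  obtain ⟨r, hr⟩ := exists_mul_dist_sq_eq_of_equidistant hpq ha hap
  have haq := sum_smul_eq_zero_of_mul_dist_sq_eq hspanp ha hr
  obtain ⟨ρ, hρ⟩ := exists_mul_dist_sq_eq_of_equidistant hqs ha haq
  set β := ∑ l, a l * ‖p l‖ ^ 2
  set β' := ∑ l, a l * ‖q l‖ ^ 2
  have hβ : β ≠ 0 := ne_zero_of_not_cospherical ha0 hr hp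
  have hβ' : β' ≠ 0 := ne_zero_of_not_cospherical ha0 hρ hq
  set k := β' / β
  -- the ratio `k` is chosen so that the diagonal defects `β' / a i` and `k * β / a i` cancel
  have hdiff : ∀ i j, dist (s i) (q j) ^ 2 - k * dist (q j) (p i) ^ 2 = ρ i ^ 2 - k * r j ^ 2 := by
    intro i j
    rcases eq_or_ne j i with rfl | hji
    · have hs' := hρ j j
      have hq' := hr j j
      simp only [if_true] at hs' hq'
      have hkβ : k * β = β' := div_mul_cancel₀ β' hβ
      refine mul_left_cancel₀ (ha0 j) ?_
      linear_combination hs' - k * hq' - hkβ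
    · have hs' := hρ i j
      have hq' := hr j i
      simp only [if_neg hji, if_neg hji.symm, add_zero] at hs' hq'
      rw [mul_left_cancel₀ (ha0 i) hs', mul_left_cancel₀ (ha0 j) hq']
  have hinner : ∀ i j, ⟪s i - k • p i, q j⟫ =
      (‖s i‖ ^ 2 - k * ‖p i‖ ^ 2 - ρ i ^ 2) / 2 + ((1 - k) * ‖q j‖ ^ 2 + k * r j ^ 2) / 2 := by
    intro i j
    have h := hdiff i j
    rw [dist_eq_norm, dist_eq_norm, norm_sub_sq_real, norm_sub_sq_real, real_inner_comm (p i)] at h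
    rw [inner_sub_left, real_inner_smul_left]
    linear_combination -h / 2
  refine ⟨k, div_ne_zero hβ' hβ, s i₀ - k • p i₀, fun i => ?_⟩
  rw [← eq_of_inner_eq_add hspanq hinner i i₀]
  abel

namespace Homothetic

variable {n d : ℕ} {X Y Z : Fin n → EuclideanSpace ℝ (Fin d)}

theorem iff_exists_smul_add :
    Homothetic X Y ↔ ∃ k : ℝ, k ≠ 0 ∧ ∃ v, ∀ i, Y i = k • X i + v := by
  constructor
  · rintro (⟨c, k, hk, h⟩ | ⟨v, h⟩)
    · exact ⟨k, hk, (1 - k) • c, fun i => by linear_combination (norm := module) h i⟩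
    · exact ⟨1, one_ne_zero, v, fun i => by rw [h, one_smul]⟩
  · rintro ⟨k, hk, v, h⟩
    rcases eq_or_ne k 1 with rfl | hk1
    · exact Or.inr ⟨v, fun i => by rw [h, one_smul]⟩
    · -- the centre is the fixed point of `z ↦ k • z + v`
      refine Or.inl ⟨(1 - k)⁻¹ • v, k, hk, fun i => ?_⟩
      have h1k : (1 : ℝ) - k ≠ 0 := sub_ne_zero.2 hk1.symm
      rw [h i]
      match_scalars
      · ring
      · field_simp
        ring

theorem refl (X : Fin n → EuclideanSpace ℝ (Fin d)) : Homothetic X X :=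
  Or.inr ⟨0, fun _ => (add_zero _).symm⟩

theorem symm (h : Homothetic X Y) : Homothetic Y X := by
  obtain ⟨k, hk, v, h⟩ := iff_exists_smul_add.1 h
  refine iff_exists_smul_add.2 ⟨k⁻¹, inv_ne_zero hk, -(k⁻¹ • v), fun i => ?_⟩
  rw [h, smul_add, smul_smul, inv_mul_cancel₀ hk, one_smul, add_neg_cancel_right]

theorem trans (h₁ : Homothetic X Y) (h₂ : Homothetic Y Z) : Homothetic X Z := by
  obtain ⟨k₁, hk₁, v₁, h₁⟩ := iff_exists_smul_add.1 h₁
  obtain ⟨k₂, hk₂, v₂, h₂⟩ := iff_exists_smul_add.1 h₂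
  refine iff_exists_smul_add.2 ⟨k₂ * k₁, mul_ne_zero hk₂ hk₁, k₂ • v₁ + v₂, fun i => ?_⟩
  rw [h₂, h₁, smul_add, smul_smul, add_assoc]

end Homothetic

/-- In the Perpendicular Bisector Construction in `ℝ^{n-2}` (all
generations defined and nondegenerate), all odd-generation point sets are pairwise
homothetic, and all even-generation point sets are pairwise homothetic.
(Here `V 0` is the first generation, so generations `2j` are odd-numbered
`N^(2j+1)` and generations `2j+1` are even-numbered `N^(2j+2)`.) -/
theorem stmt_12 {n : ℕ} (V : ℕ → Fin n → EuclideanSpace ℝ (Fin (n - 2)))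
    (hstep : ∀ (k : ℕ) (i : Fin n), ∃ r : ℝ, ∀ j, j ≠ i → dist (V (k + 1) i) (V k j) = r)
    (hind : ∀ (k : ℕ) (i : Fin n),
      AffineIndependent ℝ (fun j : {j : Fin n // j ≠ i} => V k j))
    (hnoncon : ∀ k : ℕ,
      ¬∃ (C : EuclideanSpace ℝ (Fin (n - 2))) (r : ℝ), ∀ i, dist C (V k i) = r) :
    (∀ j l : ℕ, Homothetic (V (2 * j)) (V (2 * l))) ∧
      (∀ j l : ℕ, Homothetic (V (2 * j + 1)) (V (2 * l + 1))) := by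
  rcases lt_or_ge n 2 with hn | hn
  · -- for `n < 2` the ambient space is a point, so every configuration is cospherical
    have hpt : ∀ x : EuclideanSpace ℝ (Fin (n - 2)), x = 0 := fun x => by
      ext q
      exact absurd q.2 (by omega)
    exact (hnoncon 0 ⟨0, 0, fun i => by rw [hpt (V 0 i), dist_self]⟩).elim
  have hcard : Fintype.card (Fin n) = finrank ℝ (EuclideanSpace ℝ (Fin (n - 2))) + 2 := by
    rw [Fintype.card_fin, finrank_euclideanSpace_fin]
    omega
  have htwo : ∀ m, Homothetic (V m) (V (m + 2)) := fun m =>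
    Homothetic.iff_exists_smul_add.2 <| exists_smul_add_of_equidistant_two_step hcard
      (hstep m) (hstep (m + 1)) (hind m) (hind (m + 1)) (hnoncon m) (hnoncon (m + 1))
  have hchain : ∀ m j, Homothetic (V m) (V (2 * j + m)) := by
    intro m j
    induction j with
    | zero => simpa using Homothetic.refl (V m)
    | succ j ih => simpa [mul_add, add_right_comm] using ih.trans (htwo _)
  exact ⟨fun j l => by simpa using (hchain 0 j).symm.trans (hchain 0 l),
    fun j l => (hchain 1 j).symm.trans (hchain 1 l)⟩
end

section
/- Under the assumptions of the Perpendicular Bisector Construction in R^{n-2} (all generations defined and nondegenerate), the center of homothety of any pair of odd-generation polytopes P^{(2i+1)}, P^{(2j+1)} coincides with the center of homothety of any pair of even-generation polytopes P^{(2k)}, P^{(2l)} — there is a single point W about which every pair of same-parity generations is homothetic. -/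
/-!
A homothety `h` with center `c` and ratio `k` commutes with the construction: the vertex
`V (m + 1) i` is the unique point equidistant from the other vertices `V m j`, which span the
space, and `h` scales all these distances by `|k|`. Hence if `h` maps generation `0` to
generation `2`, it maps every generation `m` to generation `m + 2`, and any two generations of
the same parity are related by a power of `h` or of its inverse, all centered at `c`.
-/

open EuclideanGeometry AffineMap

section Homothety

variable {k V P : Type*} [CommRing k] [AddCommGroup V] [Module k V] [AddTorsor V P]

theorem eq_homothety_iff_sub_eq_smul_sub {c x y : V} {r : k} :
    y = homothety c r x ↔ y - c = r • (x - c) := by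
  rw [homothety_apply, vsub_eq_sub, vadd_eq_add, sub_eq_iff_eq_add]

theorem eq_homothety_pow_of_forall_eq_homothety {X : ℕ → P} {c : P} {r : k}
    (h : ∀ m, X (m + 1) = homothety c r (X m)) (t : ℕ) :
    X t = homothety c (r ^ t) (X 0) := by
  induction t with
  | zero => rw [pow_zero, homothety_one, id_apply]
  | succ t ih => rw [h, ih, pow_succ', homothety_mul_apply]

end Homothety

section HomothetyField

variable {k V P : Type*} [Field k] [AddCommGroup V] [Module k V] [AddTorsor V P]

theorem eq_homothety_inv_of_eq_homothety {c x y : P} {r : k}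
    (hr : r ≠ 0) (h : y = homothety c r x) : x = homothety c r⁻¹ y := by
  rw [h, ← homothety_mul_apply, inv_mul_cancel₀ hr, homothety_one, id_apply]

theorem exists_eq_homothety_of_mod_two_eq {ι : Type*}
    {X : ℕ → ι → P} {c : P} {r : k} (hr : r ≠ 0)
    (h : ∀ m i, X (m + 2) i = homothety c r (X m i)) {a b : ℕ} (hab : a % 2 = b % 2) :
    ∃ s : k, s ≠ 0 ∧ ∀ i, X b i = homothety c s (X a i) := by
  have hpow : ∀ a t i, X (a + 2 * t) i = homothety c (r ^ t) (X a i) := fun a t i =>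
    eq_homothety_pow_of_forall_eq_homothety (X := fun t => X (a + 2 * t) i)
      (fun m => by rw [mul_add, mul_one, ← add_assoc]; exact h _ i) t
  rcases le_total a b with hle | hle
  · obtain ⟨t, rfl⟩ : ∃ t, b = a + 2 * t := ⟨(b - a) / 2, by omega⟩
    exact ⟨r ^ t, pow_ne_zero t hr, hpow a t⟩
  · obtain ⟨t, rfl⟩ : ∃ t, a = b + 2 * t := ⟨(a - b) / 2, by omega⟩
    exact ⟨(r ^ t)⁻¹, inv_ne_zero (pow_ne_zero t hr),
      fun i => eq_homothety_inv_of_eq_homothety (pow_ne_zero t hr) (hpow b t i)⟩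

end HomothetyField

theorem dist_homothety_homothety {𝕜 V P : Type*} [NormedField 𝕜] [SeminormedAddCommGroup V]
    [NormedSpace 𝕜 V] [PseudoMetricSpace P] [NormedAddTorsor V P] (c p q : P) (r : 𝕜) :
    dist (homothety c r p) (homothety c r q) = ‖r‖ * dist p q := by
  rw [dist_eq_norm_vsub V, ← linearMap_vsub, homothety_linear, LinearMap.smul_apply,
    LinearMap.id_apply, norm_smul, dist_eq_norm_vsub V]

section Equidistant

variable {V P ι : Type*} [NormedAddCommGroup V] [InnerProductSpace ℝ V] [MetricSpace P]
  [NormedAddTorsor V P]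

theorem eq_of_forall_dist_eq_of_affineSpan_eq_top {S : ι → P}
    (hS : affineSpan ℝ (Set.range S) = ⊤) {p q : P} {r r' : ℝ}
    (hp : ∀ i, dist p (S i) = r) (hq : ∀ i, dist q (S i) = r') : p = q := by
  have hperp : vectorSpan ℝ (Set.range S) ≤ (ℝ ∙ (q -ᵥ p))ᗮ := by
    rw [vectorSpan_def, Submodule.span_le, Set.vsub_subset_iff]
    rintro _ ⟨i, rfl⟩ _ ⟨j, rfl⟩
    refine Submodule.mem_orthogonal_singleton_iff_inner_right.2
      (inner_vsub_vsub_of_dist_eq_of_dist_eq ?_ ?_)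
    · rw [dist_comm, hp, dist_comm, hp]
    · rw [dist_comm, hq, dist_comm, hq]
  have hself : q -ᵥ p ∈ (ℝ ∙ (q -ᵥ p))ᗮ := by
    apply hperp
    rw [← direction_affineSpan, hS, AffineSubspace.direction_top]
    exact Submodule.mem_top
  rw [Submodule.mem_orthogonal_singleton_iff_inner_right, inner_self_eq_zero,
    vsub_eq_zero_iff_eq] at hself
  exact hself.symm

theorem eq_homothety_of_forall_dist_eq {S T : ι → P} {c : P} {k : ℝ}
    (hT : ∀ i, T i = homothety c k (S i)) (hspan : affineSpan ℝ (Set.range T) = ⊤)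
    {p q : P} {r r' : ℝ} (hp : ∀ i, dist p (S i) = r) (hq : ∀ i, dist q (T i) = r') :
    q = homothety c k p :=
  eq_of_forall_dist_eq_of_affineSpan_eq_top hspan hq fun i => by
    rw [hT, dist_homothety_homothety, hp]

theorem AffineIndependent.affineSpan_range_ne_eq_top [FiniteDimensional ℝ V] [Fintype ι]
    [DecidableEq ι] {s : ι → P} {i : ι}
    (hs : AffineIndependent ℝ fun j : {j // j ≠ i} => s j)
    (hcard : Fintype.card ι = Module.finrank ℝ V + 2) :
    affineSpan ℝ (Set.range fun j : {j // j ≠ i} => s j) = ⊤ := by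
  rw [hs.affineSpan_eq_top_iff_card_eq_finrank_add_one, Fintype.card_subtype_compl,
    Fintype.card_subtype_eq]
  omega

end Equidistant

section Construction

variable {V P ι : Type*} [NormedAddCommGroup V] [InnerProductSpace ℝ V] [MetricSpace P]
  [NormedAddTorsor V P] {X : ℕ → ι → P}

theorem eq_homothety_succ_of_eq_homothety
    (hstep : ∀ (m : ℕ) (i : ι), ∃ r : ℝ, ∀ j, j ≠ i → dist (X (m + 1) i) (X m j) = r)
    (hspan : ∀ (m : ℕ) (i : ι),
      affineSpan ℝ (Set.range fun j : {j // j ≠ i} => X m j) = ⊤)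
    {a b : ℕ} {c : P} {k : ℝ} (h : ∀ i, X b i = homothety c k (X a i)) (i : ι) :
    X (b + 1) i = homothety c k (X (a + 1) i) := by
  obtain ⟨r, hr⟩ := hstep a i
  obtain ⟨r', hr'⟩ := hstep b i
  exact eq_homothety_of_forall_dist_eq (S := fun j : {j // j ≠ i} => X a j) (fun j => h j)
    (hspan b i) (fun j => hr j j.2) (fun j => hr' j j.2)

theorem eq_homothety_add_two
    (hstep : ∀ (m : ℕ) (i : ι), ∃ r : ℝ, ∀ j, j ≠ i → dist (X (m + 1) i) (X m j) = r)
    (hspan : ∀ (m : ℕ) (i : ι),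
      affineSpan ℝ (Set.range fun j : {j // j ≠ i} => X m j) = ⊤)
    {c : P} {k : ℝ} (h0 : ∀ i, X 2 i = homothety c k (X 0 i)) (m : ℕ) (i : ι) :
    X (m + 2) i = homothety c k (X m i) := by
  induction m generalizing i with
  | zero => exact h0 i
  | succ m ih => exact eq_homothety_succ_of_eq_homothety hstep hspan ih i

end Construction

theorem stmt_13_general {n : ℕ} (V : ℕ → Fin n → EuclideanSpace ℝ (Fin (n - 2)))
    (hstep : ∀ (k : ℕ) (i : Fin n), ∃ r : ℝ, ∀ j, j ≠ i → dist (V (k + 1) i) (V k j) = r)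
    (hind : ∀ (k : ℕ) (i : Fin n),
      AffineIndependent ℝ (fun j : {j : Fin n // j ≠ i} => V k j))
    (hhom : ∀ a b : ℕ, a % 2 = b % 2 → a ≠ b →
      ∃ (c : EuclideanSpace ℝ (Fin (n - 2))) (k : ℝ), k ≠ 0 ∧ k ≠ 1 ∧
        ∀ i, V b i - c = k • (V a i - c)) :
    ∃ W : EuclideanSpace ℝ (Fin (n - 2)), ∀ a b : ℕ, a % 2 = b % 2 →
      ∃ k : ℝ, k ≠ 0 ∧ ∀ i, V b i - W = k • (V a i - W) := by
  by_cases hn : 2 ≤ n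
  swap
  · have : Subsingleton (EuclideanSpace ℝ (Fin (n - 2))) := by
      rw [show n - 2 = 0 by omega]; infer_instance
    exact ⟨0, fun a b _ => ⟨1, one_ne_zero, fun i => Subsingleton.elim _ _⟩⟩
  have hcard :
      Fintype.card (Fin n) = Module.finrank ℝ (EuclideanSpace ℝ (Fin (n - 2))) + 2 := by
    rw [Fintype.card_fin, finrank_euclideanSpace_fin]
    omega
  have hspan := fun k i => (hind k i).affineSpan_range_ne_eq_top hcard
  obtain ⟨c, k, hk0, -, hck⟩ := hhom 0 2 rfl (by norm_num)
  have h2 := eq_homothety_add_two hstep hspan fun i =>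
    eq_homothety_iff_sub_eq_smul_sub.2 (hck i)
  refine ⟨c, fun a b hab => ?_⟩
  obtain ⟨s, hs0, hs⟩ := exists_eq_homothety_of_mod_two_eq hk0 h2 hab
  exact ⟨s, hs0, fun i => eq_homothety_iff_sub_eq_smul_sub.1 (hs i)⟩

/-- In the Perpendicular Bisector Construction in `ℝ^{n-2}` (all
generations defined and nondegenerate), assuming every pair of same-parity
generations is related by a genuine homothety (ratio `≠ 0, 1`, so its center is a
well-defined unique point), there is a single point `W` about which every pair of
same-parity generations is homothetic: the center of homothety of any pair of
odd-generation polytopes coincides with that of any pair of even-generation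
polytopes. -/
theorem stmt_13 {n : ℕ} (V : ℕ → Fin n → EuclideanSpace ℝ (Fin (n - 2)))
    (hstep : ∀ (k : ℕ) (i : Fin n), ∃ r : ℝ, ∀ j, j ≠ i → dist (V (k + 1) i) (V k j) = r)
    (hind : ∀ (k : ℕ) (i : Fin n),
      AffineIndependent ℝ (fun j : {j : Fin n // j ≠ i} => V k j))
    (hnoncon : ∀ k : ℕ,
      ¬∃ (C : EuclideanSpace ℝ (Fin (n - 2))) (r : ℝ), ∀ i, dist C (V k i) = r)
    (hhom : ∀ a b : ℕ, a % 2 = b % 2 → a ≠ b →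
      ∃ (c : EuclideanSpace ℝ (Fin (n - 2))) (k : ℝ), k ≠ 0 ∧ k ≠ 1 ∧
        ∀ i, V b i - c = k • (V a i - c)) :
    ∃ W : EuclideanSpace ℝ (Fin (n - 2)), ∀ a b : ℕ, a % 2 = b % 2 →
      ∃ k : ℝ, k ≠ 0 ∧ ∀ i, V b i - W = k • (V a i - W) :=
  stmt_13_general V hstep hind hhom
end
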